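/- For every z ∈ ℂ and every τ in the upper half plane, θ[1;3/5](τ)² · θ[1;1/5](z,τ) · θ[1;9/5](z,τ) − θ[1;1/5](τ)² · θ[1;3/5](z,τ) · θ[1;7/5](z,τ) + θ[1;1/5](τ) · θ[1;3/5](τ) · θ[1;1](z,τ)² = 0. -/
import Mathlib
set_option linter.unreachableTactic false
set_option linter.unusedTactic false
set_option linter.unnecessarySeqFocus false


open Complex

noncomputable section

/-- The theta function with characteristics
`θ[ε;ε'](ζ,τ) = Σ_{n∈ℤ} exp(2πi((1/2)(n+ε/2)²τ + (n+ε/2)(ζ+ε'/2)))`. -/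
noncomputable def jtheta (ε ε' : ℝ) (ζ τ : ℂ) : ℂ :=
  ∑' n : ℤ, Complex.exp (2 * Real.pi * I *
    ((1 / 2) * ((n : ℂ) + (ε : ℂ) / 2) ^ 2 * τ +
      ((n : ℂ) + (ε : ℂ) / 2) * (ζ + (ε' : ℂ) / 2)))

/-- The theta constant `θ[ε;ε'](τ) = θ[ε;ε'](0,τ)`. -/
noncomputable def jthetaConst (ε ε' : ℝ) (τ : ℂ) : ℂ := jtheta ε ε' 0 τ

/-- `θ'[ε;ε'](τ)`: the derivative of `ζ ↦ θ[ε;ε'](ζ,τ)` at `ζ = 0`. -/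
noncomputable def jthetaDeriv (ε ε' : ℝ) (τ : ℂ) : ℂ :=
  deriv (fun ζ : ℂ => jtheta ε ε' ζ τ) 0

/-- The Dedekind eta function `η(τ) = q^{1/24} ∏_{n=1}^∞ (1 - qⁿ)`, `q = exp(2πiτ)`. -/
noncomputable def dedekindEta (τ : ℂ) : ℂ :=
  Complex.exp (2 * Real.pi * I * τ / 24) *
    ∏' n : ℕ, (1 - Complex.exp (2 * Real.pi * I * τ) ^ (n + 1))

/-- The Legendre-type symbol mod 5. -/
def chi5 (d : ℕ) : ℤ :=
  if d % 5 = 1 ∨ d % 5 = 4 then 1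
  else if d % 5 = 2 ∨ d % 5 = 3 then -1
  else 0

namespace Level5Aux

def term (τ w : ℂ) (n : ℤ) : ℂ :=
  Complex.exp (2 * Real.pi * I *
    ((1 / 2) * ((n : ℂ) + 1 / 2) ^ 2 * τ + ((n : ℂ) + 1 / 2) * (w + 1 / 2)))

def U (τ w : ℂ) : ℂ := ∑' n : ℤ, term τ w n

lemma term_eq_jacobi (τ w : ℂ) (n : ℤ) :
    term τ w n = Complex.exp (Real.pi * I * τ / 4 + Real.pi * I * (w + 1 / 2)) *
      jacobiTheta₂_term n (w + 1 / 2 + τ / 2) τ := by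
  rw [term, jacobiTheta₂_term, ← Complex.exp_add]
  congr 1
  ring

lemma summable_term {τ : ℂ} (hτ : 0 < τ.im) (w : ℂ) : Summable (term τ w) := by
  have h := (summable_jacobiTheta₂_term_iff (w + 1 / 2 + τ / 2) τ).mpr hτ
  have := h.mul_left (Complex.exp (Real.pi * I * τ / 4 + Real.pi * I * (w + 1 / 2)))
  refine this.congr fun n => ?_
  exact (term_eq_jacobi τ w n).symm

lemma summable_norm_term {τ : ℂ} (hτ : 0 < τ.im) (w : ℂ) :
    Summable fun n : ℤ => ‖term τ w n‖ :=
  (summable_term hτ w).norm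

set_option maxHeartbeats 1000000 in
abbrev I4 : Type := (ℤ × ℤ) × (ℤ × ℤ)

/-- Product of four theta terms. -/
def F (τ a1 a2 a3 a4 : ℂ) (q : I4) : ℂ :=
  (term τ a1 q.1.1 * term τ a2 q.1.2) * (term τ a3 q.2.1 * term τ a4 q.2.2)

lemma summable_norm_pair {τ : ℂ} (hτ : 0 < τ.im) (w1 w2 : ℂ) :
    Summable fun p : ℤ × ℤ => ‖term τ w1 p.1 * term τ w2 p.2‖ :=
  Summable.mul_norm (summable_norm_term hτ w1) (summable_norm_term hτ w2)

lemma summable_F {τ : ℂ} (hτ : 0 < τ.im) (a1 a2 a3 a4 : ℂ) :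
    Summable (F τ a1 a2 a3 a4) := by
  have h := summable_mul_of_summable_norm (R := ℂ)
    (f := fun p : ℤ × ℤ => term τ a1 p.1 * term τ a2 p.2)
    (g := fun p : ℤ × ℤ => term τ a3 p.1 * term τ a4 p.2)
    (summable_norm_pair hτ a1 a2) (summable_norm_pair hτ a3 a4)
  exact h.congr fun q => rfl

lemma U4 {τ : ℂ} (hτ : 0 < τ.im) (a1 a2 a3 a4 : ℂ) :
    (U τ a1 * U τ a2) * (U τ a3 * U τ a4) = ∑' q : I4, F τ a1 a2 a3 a4 q := by
  have h12 : U τ a1 * U τ a2 = ∑' p : ℤ × ℤ, term τ a1 p.1 * term τ a2 p.2 :=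
    tsum_mul_tsum_of_summable_norm (summable_norm_term hτ a1) (summable_norm_term hτ a2)
  have h34 : U τ a3 * U τ a4 = ∑' p : ℤ × ℤ, term τ a3 p.1 * term τ a4 p.2 :=
    tsum_mul_tsum_of_summable_norm (summable_norm_term hτ a3) (summable_norm_term hτ a4)
  rw [h12, h34]
  exact tsum_mul_tsum_of_summable_norm (summable_norm_pair hτ a1 a2) (summable_norm_pair hτ a3 a4)

/-- Even-class parametrisation. -/
def Pe : I4 → I4 := fun m => ((m.1.1, m.1.2), (m.2.1, m.1.1 + m.1.2 + m.2.1 + 2 * m.2.2))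

/-- Odd-class parametrisation. -/
def Po : I4 → I4 := fun m => ((m.1.1, m.1.2), (m.2.1, m.1.1 + m.1.2 + m.2.1 + 2 * m.2.2 + 1))

/-- Parity splitting of the four-dimensional lattice. -/
def Ebp : Bool × I4 ≃ I4 where
  toFun := fun x => if x.1 then Po x.2 else Pe x.2
  invFun := fun n =>
    ((n.2.2 - n.1.1 - n.1.2 - n.2.1) % 2 = 1,
      ((n.1.1, n.1.2), (n.2.1, (n.2.2 - n.1.1 - n.1.2 - n.2.1) / 2)))
  left_inv := by
    rintro ⟨s, ⟨⟨a, b⟩, c, d⟩⟩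
    cases s <;> simp [Pe, Po, Prod.ext_iff] <;> omega
  right_inv := by
    rintro ⟨⟨a, b⟩, c, d⟩
    by_cases h : (d - a - b - c) % 2 = 1 <;> simp [h, Pe, Po, Prod.ext_iff] <;> omega

set_option maxHeartbeats 1000000 in
lemma tsum_split {τ : ℂ} (hτ : 0 < τ.im) (a1 a2 a3 a4 : ℂ) :
    ∑' q : I4, F τ a1 a2 a3 a4 q =
      (∑' m : I4, F τ a1 a2 a3 a4 (Pe m)) + ∑' m : I4, F τ a1 a2 a3 a4 (Po m) := by
  rw [← Ebp.tsum_eq (F τ a1 a2 a3 a4)]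
  have hs : Summable fun x : Bool × I4 => F τ a1 a2 a3 a4 (Ebp x) :=
    Ebp.summable_iff.mpr (summable_F hτ a1 a2 a3 a4)
  rw [Summable.tsum_prod' hs fun b => hs.prod_factor b, tsum_fintype]
  simp only [Fintype.sum_bool]
  have ht : ∀ m : I4, Ebp (true, m) = Po m := fun m => rfl
  have hf : ∀ m : I4, Ebp (false, m) = Pe m := fun m => rfl
  simp only [ht, hf]
  exact add_comm _ _

/-- The map giving `F₃∘Pe = F₂∘Pe∘σK`. -/
def sigK : I4 ≃ I4 where
  toFun := fun m => ((-m.2.2, m.1.1 + m.1.2 + m.2.2), (m.1.1 + m.2.1 + m.2.2, -m.1.1))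
  invFun := fun o => ((-o.2.2, o.1.1 + o.1.2 + o.2.2), (o.1.1 + o.2.1 + o.2.2, -o.1.1))
  left_inv := by rintro ⟨⟨a, b⟩, c, d⟩; simp [Prod.ext_iff] <;> omega
  right_inv := by rintro ⟨⟨a, b⟩, c, d⟩; simp [Prod.ext_iff] <;> omega

/-- The map giving `F₁∘Po = F₂∘Po∘σH`. -/
def sigH : I4 ≃ I4 where
  toFun := fun m => ((1 + m.1.1 + m.1.2 + m.2.1 + m.2.2, -1 - m.2.1 - m.2.2),
    (-1 - m.1.2 - m.2.2, m.2.2))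
  invFun := fun o => ((o.1.1 + o.1.2 + o.2.1 + o.2.2 + 1, -1 - o.2.1 - o.2.2),
    (-1 - o.1.2 - o.2.2, o.2.2))
  left_inv := by rintro ⟨⟨a, b⟩, c, d⟩; simp [Prod.ext_iff] <;> omega
  right_inv := by rintro ⟨⟨a, b⟩, c, d⟩; simp [Prod.ext_iff] <;> omega

/-- The map giving `F₁∘Pe = -F₃∘Po∘σM`. -/
def sigM : I4 ≃ I4 where
  toFun := fun m => ((-m.2.2, m.1.1 + m.1.2 + m.2.2),
    (m.1.1 + m.2.1 + m.2.2, -1 - m.1.1 - m.1.2 - m.2.1 - m.2.2))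
  invFun := fun o => ((o.1.1 + o.1.2 + o.2.1 + o.2.2 + 1, -1 - o.2.1 - o.2.2),
    (-1 - o.1.2 - o.2.2, -o.1.1))
  left_inv := by rintro ⟨⟨a, b⟩, c, d⟩; simp [Prod.ext_iff] <;> omega
  right_inv := by rintro ⟨⟨a, b⟩, c, d⟩; simp [Prod.ext_iff] <;> omega

lemma exp_eq_exp_of_int (x y : ℂ) (n : ℤ) (h : x = y + (n : ℂ) * (2 * Real.pi * I)) :
    Complex.exp x = Complex.exp y := by
  rw [h, Complex.exp_add, Complex.exp_int_mul_two_pi_mul_I, mul_one]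

lemma exp_eq_neg_exp_of_int (x y : ℂ) (n : ℤ)
    (h : x = y + (n : ℂ) * (2 * Real.pi * I) + Real.pi * I) :
    Complex.exp x = -Complex.exp y := by
  rw [h, Complex.exp_add, Complex.exp_add, Complex.exp_int_mul_two_pi_mul_I,
    Complex.exp_pi_mul_I]
  ring

section Termwise

variable (τ a b c d : ℂ)

lemma L_K (m : I4) :
    F τ (a + d) (a - d) (b + c) (b - c) (Pe m) =
      F τ (a + c) (a - c) (b + d) (b - d) (Pe (sigK m)) := by
  obtain ⟨⟨m1, m2⟩, m3, m4⟩ := m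
  simp only [F, Pe, sigK, term, Equiv.coe_fn_mk]
  rw [← Complex.exp_add, ← Complex.exp_add, ← Complex.exp_add,
    ← Complex.exp_add, ← Complex.exp_add, ← Complex.exp_add]
  congr 1
  push_cast
  ring

lemma L_H (m : I4) :
    F τ (a + b) (a - b) (c + d) (c - d) (Po m) =
      F τ (a + c) (a - c) (b + d) (b - d) (Po (sigH m)) := by
  obtain ⟨⟨m1, m2⟩, m3, m4⟩ := m
  simp only [F, Po, sigH, term, Equiv.coe_fn_mk]
  rw [← Complex.exp_add, ← Complex.exp_add, ← Complex.exp_add,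
    ← Complex.exp_add, ← Complex.exp_add, ← Complex.exp_add]
  refine exp_eq_exp_of_int _ _ (m2 + m3 + m4 + 1) ?_
  push_cast
  ring

lemma L_M (m : I4) :
    F τ (a + b) (a - b) (c + d) (c - d) (Pe m) =
      -F τ (a + d) (a - d) (b + c) (b - c) (Po (sigM m)) := by
  obtain ⟨⟨m1, m2⟩, m3, m4⟩ := m
  simp only [F, Pe, Po, sigM, term, Equiv.coe_fn_mk]
  rw [← Complex.exp_add, ← Complex.exp_add, ← Complex.exp_add,
    ← Complex.exp_add, ← Complex.exp_add, ← Complex.exp_add]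
  refine exp_eq_neg_exp_of_int _ _ (m2 + m3 + m4) ?_
  push_cast
  ring

end Termwise

set_option maxHeartbeats 1000000 in
/-- The Weierstrass three-term theta identity. -/
lemma weierstrass3 {τ : ℂ} (hτ : 0 < τ.im) (a b c d : ℂ) :
    (U τ (a + b) * U τ (a - b)) * (U τ (c + d) * U τ (c - d)) -
      (U τ (a + c) * U τ (a - c)) * (U τ (b + d) * U τ (b - d)) +
      (U τ (a + d) * U τ (a - d)) * (U τ (b + c) * U τ (b - c)) = 0 := by
  rw [U4 hτ (a + b) (a - b) (c + d) (c - d), U4 hτ (a + c) (a - c) (b + d) (b - d),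
    U4 hτ (a + d) (a - d) (b + c) (b - c), tsum_split hτ, tsum_split hτ, tsum_split hτ]
  have h1 : ∑' m : I4, F τ (a + b) (a - b) (c + d) (c - d) (Pe m) =
      -∑' m : I4, F τ (a + d) (a - d) (b + c) (b - c) (Po m) := by
    rw [tsum_congr (L_M τ a b c d), tsum_neg]
    congr 1
    exact sigM.tsum_eq fun m => F τ (a + d) (a - d) (b + c) (b - c) (Po m)
  have h2 : ∑' m : I4, F τ (a + b) (a - b) (c + d) (c - d) (Po m) =
      ∑' m : I4, F τ (a + c) (a - c) (b + d) (b - d) (Po m) := by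
    rw [tsum_congr (L_H τ a b c d)]
    exact sigH.tsum_eq fun m => F τ (a + c) (a - c) (b + d) (b - d) (Po m)
  have h3 : ∑' m : I4, F τ (a + d) (a - d) (b + c) (b - c) (Pe m) =
      ∑' m : I4, F τ (a + c) (a - c) (b + d) (b - d) (Pe m) := by
    rw [tsum_congr (L_K τ a b c d)]
    exact sigK.tsum_eq fun m => F τ (a + c) (a - c) (b + d) (b - d) (Pe m)
  rw [h1, h2, h3]
  ring

/-- `U` is invariant under `w ↦ -1-w`. -/
lemma U_reflect (τ w : ℂ) : U τ (-1 - w) = U τ w := by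
  rw [U, U, ← (Equiv.subLeft (-1 : ℤ)).tsum_eq (term τ (-1 - w))]
  refine tsum_congr fun n => ?_
  simp only [Equiv.subLeft_apply]
  rw [term, term]
  congr 1
  push_cast
  ring

/-- `jtheta` with `ε = 1` in terms of `U`. -/
lemma jtheta_eq_U (e' : ℝ) (ζ τ : ℂ) :
    jtheta 1 e' ζ τ = U τ (ζ + (e' : ℂ) / 2 - 1 / 2) := by
  rw [jtheta, U]
  refine tsum_congr fun n => ?_
  rw [term]
  congr 1
  push_cast
  ring

end Level5Aux

/-- a three-term theta function identity of level five. -/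
theorem theta_identity_level5_one (z τ : ℂ) (hτ : 0 < τ.im) :
    jthetaConst 1 (3/5) τ ^ 2 * jtheta 1 (1/5) z τ * jtheta 1 (9/5) z τ -
      jthetaConst 1 (1/5) τ ^ 2 * jtheta 1 (3/5) z τ * jtheta 1 (7/5) z τ +
      jthetaConst 1 (1/5) τ * jthetaConst 1 (3/5) τ * jtheta 1 1 z τ ^ 2 = 0 := by
  have W := Level5Aux.weierstrass3 hτ z (-(2/5)) (-(1/5)) 0
  have hrefl : Level5Aux.U τ (-(3/5) : ℂ) = Level5Aux.U τ (-(2/5)) := by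
    rw [show (-(3/5) : ℂ) = -1 - -(2/5) by norm_num, Level5Aux.U_reflect]
  simp only [jthetaConst, Level5Aux.jtheta_eq_U]
  push_cast
  ring_nf
  ring_nf at W hrefl
  rw [hrefl] at W
  linear_combination W
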